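/- arXiv:2210.12271 — 7 statements merged into one kernel-verified Lean document; each statement's English description precedes it below -/
import Mathlib

section
/- Let $j, k, n$ be positive integers with $k \le n+1-j$ and $n \ne 2k-1$. Then $\left|\binom{n}{k} - \binom{n}{k-1}\right| \ge \left|\binom{n-j}{k} - \binom{n-j}{k-1}\right|$. -/
private def hfun (k n : ℕ) : ℤ := (n.choose (k+1) : ℤ) - n.choose k

private lemma hfun_pascal (k n : ℕ) :
    hfun (k+1) (n+1) = hfun (k+1) n + hfun k n := by
  unfold hfun
  rw [Nat.choose_succ_succ (n) (k+1), Nat.choose_succ_succ n k]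
  push_cast
  ring

private lemma hfun_nonneg (k n : ℕ) (h : 2*k+1 ≤ n) : 0 ≤ hfun k n := by
  have key := Nat.choose_succ_right_eq n k
  have h1 : n.choose k * (k+1) ≤ n.choose (k+1) * (k+1) := by
    rw [key]
    exact Nat.mul_le_mul_left _ (by omega)
  have h2 : n.choose k ≤ n.choose (k+1) := Nat.le_of_mul_le_mul_right h1 (by omega)
  unfold hfun
  have : (n.choose k : ℤ) ≤ n.choose (k+1) := by exact_mod_cast h2
  omega

private lemma hfun_pos (k n : ℕ) (h : 2*k+2 ≤ n) : 1 ≤ hfun k n := by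
  have key := Nat.choose_succ_right_eq n k
  have hp : 0 < n.choose k := Nat.choose_pos (by omega)
  have e1 : n.choose k * (k+2) ≤ n.choose (k+1) * (k+1) := by
    rw [key]
    exact Nat.mul_le_mul_left _ (by omega)
  have h2 : n.choose k < n.choose (k+1) := by nlinarith [e1, hp]
  unfold hfun
  have : (n.choose k : ℤ) < n.choose (k+1) := by exact_mod_cast h2
  omega

private lemma hfun_mono (k m n : ℕ) (h1 : 2*k+1 ≤ m) (h2 : m ≤ n) :
    hfun k m ≤ hfun k n := by
  induction n with
  | zero => omega
  | succ N ih =>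
    rcases Nat.lt_or_ge N m with hlt | hge
    · have : m = N + 1 := by omega
      subst this; rfl
    · have step : hfun k N ≤ hfun k (N+1) := by
        cases k with
        | zero =>
          unfold hfun
          simp only [zero_add, Nat.choose_one_right, Nat.choose_zero_right]
          push_cast; omega
        | succ K =>
          rw [hfun_pascal]
          have := hfun_nonneg K N (by omega)
          linarith
      exact le_trans (ih hge) step

private lemma hfun_master (k' m : ℕ) : ∀ (k n : ℕ), k' ≤ k → m + k ≤ n + k' →
    2*k+2 ≤ n → 2*k'+1 ≤ m → hfun k' m ≤ hfun k n := by
  intro k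
  induction k with
  | zero =>
    intro n h1 h2 h3 h4
    have : k' = 0 := by omega
    subst this
    exact hfun_mono 0 m n h4 (by omega)
  | succ K ih =>
    intro n h1 h2 h3 h4
    rcases Nat.eq_or_lt_of_le h1 with heq | hlt
    · subst heq
      exact hfun_mono _ m n h4 (by omega)
    · obtain ⟨n', rfl⟩ : ∃ n', n = n' + 1 := ⟨n - 1, by omega⟩
      rw [hfun_pascal]
      have hih : hfun k' m ≤ hfun K n' := ih n' (by omega) (by omega) (by omega) h4
      have h0 : 0 ≤ hfun (K+1) n' := hfun_nonneg (K+1) n' (by omega)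
      linarith

private lemma hfun_symm (K d : ℕ) (hd : d ≤ K) :
    hfun d (K + 1 + d) = - hfun K (K + 1 + d) := by
  unfold hfun
  have e1 : (K + 1 + d).choose (d + 1) = (K + 1 + d).choose K := by
    have := Nat.choose_symm (n := K + 1 + d) (k := K) (by omega)
    have h2 : K + 1 + d - K = d + 1 := by omega
    rw [h2] at this
    exact this
  have e2 : (K + 1 + d).choose d = (K + 1 + d).choose (K + 1) := by
    have := Nat.choose_symm (n := K + 1 + d) (k := K + 1) (by omega)
    have h2 : K + 1 + d - (K + 1) = d := by omega
    rw [h2] at this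
    exact this
  rw [e1, e2]
  ring

theorem stmt_0 (j k n : ℕ) (hj : 1 ≤ j) (hk : 1 ≤ k) (hn : 1 ≤ n)
    (hkn : k ≤ n + 1 - j) (hne : n ≠ 2 * k - 1) :
    |(n.choose k : ℤ) - n.choose (k - 1)| ≥
      |((n - j).choose k : ℤ) - (n - j).choose (k - 1)| := by
  obtain ⟨K, rfl⟩ : ∃ K, k = K + 1 := ⟨k - 1, by omega⟩
  have hjn : j ≤ n := by omega
  obtain ⟨m, hm⟩ : ∃ m, m = n - j := ⟨_, rfl⟩
  rw [← hm]
  have hmK : K ≤ m := by omega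
  have hmn : m + 1 ≤ n := by omega
  have hne' : n ≠ 2*K + 1 := by omega
  simp only [Nat.add_sub_cancel]
  show |hfun K n| ≥ |hfun K m|
  clear hm hkn hne hjn hj hn hk
  rcases Nat.lt_or_ge (2*K + 1) n with hbig | hsmall
  · -- n ≥ 2K+2
    rw [abs_of_nonneg (hfun_nonneg K n (by omega))]
    rcases Nat.lt_or_ge m (K + 1) with hmeq | hm1
    · -- m = K
      have hmKe : m = K := by omega
      have : hfun K m = -1 := by
        subst hmKe
        simp [hfun, Nat.choose_succ_self, Nat.choose_self]
      rw [this]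
      simpa using hfun_pos K n (by omega)
    · rcases Nat.lt_or_ge m (2*K + 1) with hmid | hright
      · -- K+1 ≤ m ≤ 2K : use symmetry
        obtain ⟨d, rfl⟩ : ∃ d, m = K + 1 + d := ⟨m - K - 1, by omega⟩
        have hdK : d ≤ K := by omega
        have hs := hfun_symm K d hdK
        have h0 : 0 ≤ hfun d (K+1+d) := hfun_nonneg d _ (by omega)
        have habs : |hfun K (K+1+d)| = hfun d (K+1+d) := by
          rw [abs_of_nonpos (by linarith)]
          linarith
        rw [habs]
        exact hfun_master d (K+1+d) K n hdK (by omega) (by omega) (by omega)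
      · -- m ≥ 2K+1
        rw [abs_of_nonneg (hfun_nonneg K m hright)]
        exact hfun_master K m K n le_rfl (by omega) (by omega) hright
  · -- n ≤ 2K
    obtain ⟨N, rfl⟩ : ∃ N, n = K + 1 + N := ⟨n - K - 1, by omega⟩
    have hNK : N ≤ K := by omega
    have hsN := hfun_symm K N hNK
    have h0N : 0 ≤ hfun N (K+1+N) := hfun_nonneg N _ (by omega)
    have habsN : |hfun K (K+1+N)| = hfun N (K+1+N) := by
      rw [abs_of_nonpos (by linarith)]
      linarith
    rw [habsN]
    rcases Nat.lt_or_ge m (K + 1) with hmeq | hm1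
    · have hmKe : m = K := by omega
      have : hfun K m = -1 := by
        subst hmKe
        simp [hfun, Nat.choose_succ_self, Nat.choose_self]
      rw [this]
      simpa using hfun_pos N (K+1+N) (by omega)
    · obtain ⟨d, rfl⟩ : ∃ d, m = K + 1 + d := ⟨m - K - 1, by omega⟩
      have hdN : d ≤ N := by omega
      have hsd := hfun_symm K d (by omega)
      have h0d : 0 ≤ hfun d (K+1+d) := hfun_nonneg d _ (by omega)
      have habsd : |hfun K (K+1+d)| = hfun d (K+1+d) := by
        rw [abs_of_nonpos (by linarith)]
        linarith
      rw [habsd]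
      exact hfun_master d (K+1+d) N (K+1+N) hdN (by omega) (by omega) (by omega)
end

section
/- Let $d \ge 2$ and let $h_0, h_1, \dots, h_d$ be nonnegative integers with $h_0 = 1$. Define $f_k = \sum_{j=0}^{k+1} \binom{d-j+1}{k-j+1} h_j$ for $0 \le k \le d$. Then $f_{k-1} < f_k$ for all $1 \le k < \lfloor d/2 \rfloor$, and $f_{\lfloor d/2 \rfloor - 1} \le f_{\lfloor d/2 \rfloor}$. -/
private lemma choose_le_succ' {n m : ℕ} (h : 2*m + 1 ≤ n) :
    n.choose m ≤ n.choose (m+1) := by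
  have key := Nat.choose_succ_right_eq n m
  have : n.choose m * (m+1) ≤ n.choose (m+1) * (m+1) := by
    rw [key]; exact Nat.mul_le_mul_left _ (by omega)
  exact Nat.le_of_mul_le_mul_right this (by omega)

private lemma choose_lt_succ' {n m : ℕ} (h : 2*m + 2 ≤ n) :
    n.choose m < n.choose (m+1) := by
  have key := Nat.choose_succ_right_eq n m
  have hpos : 0 < n.choose m := Nat.choose_pos (by omega)
  have : n.choose m * (m+1) < n.choose (m+1) * (m+1) := by
    rw [key]
    calc n.choose m * (m+1) < n.choose m * (m+2) := by
          exact Nat.mul_lt_mul_of_le_of_lt (le_refl _) (by omega) hpos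
      _ ≤ n.choose m * (n - m) := Nat.mul_le_mul_left _ (by omega)
  exact Nat.lt_of_mul_lt_mul_right this

private lemma step_lemma (d : ℕ) (h : ℕ → ℕ) (h0 : h 0 = 1) (f : ℕ → ℕ)
    (hf : ∀ k, k ≤ d → f k = ∑ j ∈ Finset.range (k + 2), (d + 1 - j).choose (k + 1 - j) * h j)
    (k : ℕ) (hk1 : 1 ≤ k) (hk2 : 2*k ≤ d) (strict : Bool) (hs : strict → 2*k + 1 ≤ d) :
    (if strict then f (k-1) < f k else f (k-1) ≤ f k) := by
  obtain ⟨k', rfl⟩ : ∃ k', k = k' + 1 := ⟨k - 1, by omega⟩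
  simp only [Nat.add_sub_cancel]
  rw [hf k' (by omega), hf (k'+1) (by omega)]
  have hterm : ∀ j ∈ Finset.range (k' + 2),
      (d + 1 - j).choose (k' + 1 - j) * h j ≤ (d + 1 - j).choose (k' + 1 + 1 - j) * h j := by
    intro j hj
    rw [Finset.mem_range] at hj
    have hj' : j ≤ k' + 1 := by omega
    have e1 : k' + 1 + 1 - j = (k' + 1 - j) + 1 := by omega
    rw [e1]
    exact Nat.mul_le_mul_right _ (choose_le_succ' (by omega))
  have hsub : ∑ j ∈ Finset.range (k' + 2), (d + 1 - j).choose (k' + 1 + 1 - j) * h j ≤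
      ∑ j ∈ Finset.range (k' + 1 + 2), (d + 1 - j).choose (k' + 1 + 1 - j) * h j := by
    apply Finset.sum_le_sum_of_subset
    exact Finset.range_subset_range.mpr (by omega)
  cases strict with
  | false =>
    
    calc ∑ j ∈ Finset.range (k' + 2), (d + 1 - j).choose (k' + 1 - j) * h j
        ≤ ∑ j ∈ Finset.range (k' + 2), (d + 1 - j).choose (k' + 1 + 1 - j) * h j :=
          Finset.sum_le_sum hterm
      _ ≤ _ := hsub
  | true =>
    
    have hd' : 2*(k'+1) + 1 ≤ d := hs rfl
    have hstrict : ∑ j ∈ Finset.range (k' + 2), (d + 1 - j).choose (k' + 1 - j) * h j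
        < ∑ j ∈ Finset.range (k' + 2), (d + 1 - j).choose (k' + 1 + 1 - j) * h j := by
      apply Finset.sum_lt_sum hterm
      refine ⟨0, Finset.mem_range.mpr (by omega), ?_⟩
      simp only [Nat.sub_zero, h0, Nat.mul_one]
      have e1 : k' + 1 + 1 = (k' + 1) + 1 := rfl
      exact choose_lt_succ' (by omega)
    exact lt_of_lt_of_le hstrict hsub

theorem stmt_3 (d : ℕ) (hd : 2 ≤ d) (h : ℕ → ℕ) (h0 : h 0 = 1) (f : ℕ → ℕ)
    (hf : ∀ k, k ≤ d → f k = ∑ j ∈ Finset.range (k + 2), (d + 1 - j).choose (k + 1 - j) * h j) :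
    (∀ k, 1 ≤ k → k < d / 2 → f (k - 1) < f k) ∧ f (d / 2 - 1) ≤ f (d / 2) := by
  constructor
  · intro k hk1 hk2
    have := step_lemma d h h0 f hf k hk1 (by omega) true (fun _ => by omega)
    simpa using this
  · have hk1 : 1 ≤ d / 2 := by omega
    have := step_lemma d h h0 f hf (d/2) hk1 (by omega) false (fun hc => by simp at hc)
    simpa using this
end

section
/- Let $d \ge 2$ and let $h_0, \dots, h_d$ be nonnegative integers. Define $f_k = \sum_{j=0}^{k+1} \binom{d-j+1}{k-j+1} h_j$. Then for all $0 \le k \le (d-3)/2$ we have $f_k \le f_{d-1-k}$. -/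
lemma choose_mono_below_half : ∀ (b a n : ℕ), a ≤ b → 2 * b ≤ n →
    Nat.choose n a ≤ Nat.choose n b := by
  intro b
  induction b with
  | zero => intro a n ha _; interval_cases a; rfl
  | succ b ih =>
    intro a n ha hn
    rcases Nat.eq_or_lt_of_le ha with rfl | ha'
    · rfl
    · have h1 : a ≤ b := by omega
      have h2 : b < n / 2 := by omega
      exact (ih a n h1 (by omega)).trans (Nat.choose_le_succ_of_lt_half_left h2)

lemma choose_le_choose_right {n a b : ℕ} (hab : a ≤ b) (hn : a + b ≤ n) :
    Nat.choose n a ≤ Nat.choose n b := by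
  rcases le_or_gt (2 * b) n with h | h
  · exact choose_mono_below_half b a n hab h
  · rw [← Nat.choose_symm (show b ≤ n by omega)]
    exact choose_mono_below_half (n - b) a n (by omega) (by omega)

theorem stmt_4 (d : ℕ) (hd : 2 ≤ d) (h : ℕ → ℕ) (f : ℕ → ℕ)
    (hf : ∀ k, k ≤ d → f k = ∑ j ∈ Finset.range (k + 2), (d + 1 - j).choose (k + 1 - j) * h j) :
    ∀ k, 2 * k + 3 ≤ d → f k ≤ f (d - 1 - k) := by
  intro k hk
  rw [hf k (by omega), hf (d - 1 - k) (by omega)]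
  have hidx : d - 1 - k + 2 = d + 1 - k := by omega
  rw [hidx]
  calc ∑ j ∈ Finset.range (k + 2), (d + 1 - j).choose (k + 1 - j) * h j
      ≤ ∑ j ∈ Finset.range (k + 2), (d + 1 - j).choose (d - 1 - k + 1 - j) * h j := by
        apply Finset.sum_le_sum
        intro j hj
        rw [Finset.mem_range] at hj
        apply Nat.mul_le_mul_right
        apply choose_le_choose_right (by omega) (by omega)
    _ ≤ ∑ j ∈ Finset.range (d + 1 - k), (d + 1 - j).choose (d - 1 - k + 1 - j) * h j := by
        apply Finset.sum_le_sum_of_subset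
        apply Finset.range_subset_range.mpr
        omega
end

section
/- Let $d \ge 1$, let $g \ge 1$, set $s = d + 1 - g$, and let $h_0, \dots, h_d$ be nonnegative integers with $h_0 = 1$, $h_j = 0$ for $j > s$, and $h_j = h_{s-j}$ for $0 \le j \le s$. Define $f_k = \sum_{j=0}^{k+1} \binom{d-j+1}{k-j+1} h_j$. Then $f_{k-1} > f_k$ for all $k$ with $\frac{1}{2}(d + 1 + \lfloor s/2 \rfloor) \le k \le d$. -/
/-- For `2*t ≤ n`, `C(n,t) ≥ t+1`. -/
lemma aux_choose_lb (t : ℕ) : ∀ n, 2 * t ≤ n → t + 1 ≤ n.choose t := by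
  induction t with
  | zero => intro n _; simp
  | succ t ih =>
    intro n hn
    have h1 : t + 1 ≤ n.choose t := ih n (by omega)
    have h2 : n.choose (t + 1) * (t + 1) = n.choose t * (n - t) := Nat.choose_succ_right_eq n t
    have h3 : t + 2 ≤ n - t := by omega
    have h4 : (t + 2) * (t + 1) ≤ n.choose (t + 1) * (t + 1) := by
      rw [h2]
      calc (t + 2) * (t + 1) ≤ (n - t) * n.choose t := Nat.mul_le_mul h3 h1
        _ = n.choose t * (n - t) := Nat.mul_comm _ _
    exact Nat.le_of_mul_le_mul_right h4 (by omega)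

/-- Key pairwise inequality. -/
lemma key_pair (t n1 n2 : ℕ) (h12 : n2 ≤ n1) (hsum : 4 * t + 3 ≤ n1 + n2) :
    n1.choose t + n2.choose t + 1 ≤ n1.choose (t + 1) + n2.choose (t + 1) := by
  have hn1 : 2 * t + 2 ≤ n1 := by omega
  have ha : t + 1 ≤ n1.choose t := aux_choose_lb t n1 (by omega)
  have e1 : n1.choose (t + 1) * (t + 1) = n1.choose t * (n1 - t) := Nat.choose_succ_right_eq n1 t
  have e2 : n2.choose (t + 1) * (t + 1) = n2.choose t * (n2 - t) := Nat.choose_succ_right_eq n2 t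
  rcases lt_or_ge n2 t with hc | hc
  · -- n2 < t : second binomials vanish
    have hz : n2.choose t = 0 := Nat.choose_eq_zero_of_lt hc
    have hz' : n2.choose (t + 1) = 0 := Nat.choose_eq_zero_of_lt (by omega)
    rw [hz, hz']
    have h4 : (n1.choose t + 1) * (t + 1) ≤ n1.choose (t + 1) * (t + 1) := by
      rw [e1]
      have : n1 - t ≥ t + 2 := by omega
      nlinarith [ha]
    have := Nat.le_of_mul_le_mul_right h4 (by omega)
    omega
  · -- t ≤ n2
    have hb : 1 ≤ n2.choose t := Nat.choose_pos hc
    have hab : n2.choose t ≤ n1.choose t := Nat.choose_le_choose t h12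
    have hp : t + 2 ≤ n1 - t := by omega
    have hpq : 2 * t + 3 ≤ (n1 - t) + (n2 - t) := by omega
    have h4 : (n1.choose t + n2.choose t + 1) * (t + 1)
        ≤ n1.choose (t + 1) * (t + 1) + n2.choose (t + 1) * (t + 1) := by
      rw [e1, e2]
      set a := n1.choose t
      set b := n2.choose t
      set p := n1 - t
      set q := n2 - t
      have hq : 2 * t + 3 - p ≤ q := by omega
      zify
      nlinarith [mul_nonneg (by push_cast; linarith : (0:ℤ) ≤ (a:ℤ) - b)
          (by push_cast; linarith : (0:ℤ) ≤ (p:ℤ) - (t + 2)),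
        mul_nonneg (by push_cast; linarith : (0:ℤ) ≤ (b:ℤ))
          (by push_cast; linarith : (0:ℤ) ≤ (p:ℤ) + q - (2 * t + 3))]
    rw [← add_mul] at h4
    exact Nat.le_of_mul_le_mul_right h4 (by omega)

theorem stmt_8 (d g s : ℕ) (hd : 1 ≤ d) (hg : 1 ≤ g) (hsd : s = d + 1 - g)
    (h : ℕ → ℕ) (h0 : h 0 = 1) (hvan : ∀ j, s < j → h j = 0)
    (hsym : ∀ j, j ≤ s → h j = h (s - j)) (f : ℕ → ℕ)
    (hf : ∀ k, k ≤ d → f k = ∑ j ∈ Finset.range (k + 2), (d + 1 - j).choose (k + 1 - j) * h j) :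
    ∀ k, d + 1 + s / 2 ≤ 2 * k → k ≤ d → f (k - 1) > f k := by
  intro k hk1 hk2
  have hs_le_d : s ≤ d := by omega
  have hk_ge1 : 1 ≤ k := by omega
  -- rewrite f k
  have hfk : f k = ∑ j ∈ Finset.range (s + 1), (d + 1 - j).choose (d - k) * h j := by
    rw [hf k hk2]
    have e1 : ∑ j ∈ Finset.range (k + 2), (d + 1 - j).choose (k + 1 - j) * h j
        = ∑ j ∈ Finset.range (k + 2), (d + 1 - j).choose (d - k) * h j := by
      apply Finset.sum_congr rfl
      intro j hj
      simp only [Finset.mem_range] at hj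
      congr 1
      have h1 : k + 1 - j ≤ d + 1 - j := by omega
      have h2 : d - k = (d + 1 - j) - (k + 1 - j) := by omega
      rw [h2, Nat.choose_symm h1]
    rw [e1]
    have e2 : ∑ j ∈ Finset.range (k + 2), (d + 1 - j).choose (d - k) * h j
        = ∑ j ∈ Finset.range (d + 2), (d + 1 - j).choose (d - k) * h j := by
      apply Finset.sum_subset (Finset.range_subset_range.2 (by omega))
      intro j hj hj2
      simp only [Finset.mem_range, not_lt] at hj hj2
      rw [Nat.choose_eq_zero_of_lt (by omega), zero_mul]
    have e3 : ∑ j ∈ Finset.range (s + 1), (d + 1 - j).choose (d - k) * h j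
        = ∑ j ∈ Finset.range (d + 2), (d + 1 - j).choose (d - k) * h j := by
      apply Finset.sum_subset (Finset.range_subset_range.2 (by omega))
      intro j hj hj2
      simp only [Finset.mem_range, not_lt] at hj hj2
      rw [hvan j (by omega), mul_zero]
    rw [e2, ← e3]
  -- rewrite f (k-1)
  have hfk1 : f (k - 1) = ∑ j ∈ Finset.range (s + 1), (d + 1 - j).choose (d - k + 1) * h j := by
    rw [hf (k - 1) (by omega)]
    have hr : k - 1 + 2 = k + 1 := by omega
    rw [hr]
    have e1 : ∑ j ∈ Finset.range (k + 1), (d + 1 - j).choose (k - 1 + 1 - j) * h j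
        = ∑ j ∈ Finset.range (k + 1), (d + 1 - j).choose (d - k + 1) * h j := by
      apply Finset.sum_congr rfl
      intro j hj
      simp only [Finset.mem_range] at hj
      congr 1
      have h1 : k - j ≤ d + 1 - j := by omega
      have h2 : k - 1 + 1 - j = k - j := by omega
      have h3 : d - k + 1 = (d + 1 - j) - (k - j) := by omega
      rw [h2, h3, Nat.choose_symm h1]
    rw [e1]
    have e2 : ∑ j ∈ Finset.range (k + 1), (d + 1 - j).choose (d - k + 1) * h j
        = ∑ j ∈ Finset.range (d + 2), (d + 1 - j).choose (d - k + 1) * h j := by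
      apply Finset.sum_subset (Finset.range_subset_range.2 (by omega))
      intro j hj hj2
      simp only [Finset.mem_range, not_lt] at hj hj2
      rw [Nat.choose_eq_zero_of_lt (by omega), zero_mul]
    have e3 : ∑ j ∈ Finset.range (s + 1), (d + 1 - j).choose (d - k + 1) * h j
        = ∑ j ∈ Finset.range (d + 2), (d + 1 - j).choose (d - k + 1) * h j := by
      apply Finset.sum_subset (Finset.range_subset_range.2 (by omega))
      intro j hj hj2
      simp only [Finset.mem_range, not_lt] at hj hj2
      rw [hvan j (by omega), mul_zero]
    rw [e2, ← e3]
  rw [hfk, hfk1]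
  -- symmetrized doubles
  have doubling : ∀ c : ℕ,
      2 * (∑ j ∈ Finset.range (s + 1), (d + 1 - j).choose c * h j)
      = ∑ j ∈ Finset.range (s + 1),
          ((d + 1 - j).choose c + (d + 1 - (s - j)).choose c) * h j := by
    intro c
    rw [two_mul]
    nth_rewrite 2 [← Finset.sum_range_reflect (fun j => (d + 1 - j).choose c * h j) (s + 1)]
    rw [← Finset.sum_add_distrib]
    apply Finset.sum_congr rfl
    intro j hj
    simp only [Finset.mem_range] at hj
    have hj' : j ≤ s := by omega
    have e : s + 1 - 1 - j = s - j := by omega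
    rw [e, ← hsym j hj', add_mul]
  have pair : ∀ j ∈ Finset.range (s + 1),
      ((d + 1 - j).choose (d - k) + (d + 1 - (s - j)).choose (d - k) + 1)
        ≤ (d + 1 - j).choose (d - k + 1) + (d + 1 - (s - j)).choose (d - k + 1) := by
    intro j hj
    simp only [Finset.mem_range] at hj
    have hj' : j ≤ s := by omega
    rcases le_or_gt (s - j) j with hc | hc
    · have := key_pair (d - k) (d + 1 - (s - j)) (d + 1 - j) (by omega) (by omega)
      omega
    · have := key_pair (d - k) (d + 1 - j) (d + 1 - (s - j)) (by omega) (by omega)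
      omega
  have hsumh : 1 ≤ ∑ j ∈ Finset.range (s + 1), h j := by
    calc 1 = h 0 := h0.symm
      _ ≤ ∑ j ∈ Finset.range (s + 1), h j :=
        Finset.single_le_sum (fun i _ => Nat.zero_le _) (Finset.mem_range.2 (by omega))
  have main : 2 * (∑ j ∈ Finset.range (s + 1), (d + 1 - j).choose (d - k) * h j) + 1
      ≤ 2 * (∑ j ∈ Finset.range (s + 1), (d + 1 - j).choose (d - k + 1) * h j) := by
    rw [doubling (d - k), doubling (d - k + 1)]
    calc (∑ j ∈ Finset.range (s + 1),
            ((d + 1 - j).choose (d - k) + (d + 1 - (s - j)).choose (d - k)) * h j) + 1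
        ≤ (∑ j ∈ Finset.range (s + 1),
            ((d + 1 - j).choose (d - k) + (d + 1 - (s - j)).choose (d - k)) * h j)
          + ∑ j ∈ Finset.range (s + 1), h j := by omega
      _ = ∑ j ∈ Finset.range (s + 1),
            (((d + 1 - j).choose (d - k) + (d + 1 - (s - j)).choose (d - k)) * h j + h j) := by
          rw [Finset.sum_add_distrib]
      _ ≤ ∑ j ∈ Finset.range (s + 1),
            ((d + 1 - j).choose (d - k + 1) + (d + 1 - (s - j)).choose (d - k + 1)) * h j := by
          apply Finset.sum_le_sum
          intro j hj
          have hp := pair j hj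
          calc ((d + 1 - j).choose (d - k) + (d + 1 - (s - j)).choose (d - k)) * h j + h j
              = ((d + 1 - j).choose (d - k) + (d + 1 - (s - j)).choose (d - k) + 1) * h j := by
                ring
            _ ≤ ((d + 1 - j).choose (d - k + 1) + (d + 1 - (s - j)).choose (d - k + 1)) * h j :=
                Nat.mul_le_mul_right _ hp
  omega
end

section
/- Let $s \ge 1$ and $d \ge 2s^2 - 2s - 2$, and let $h_0, \dots, h_d$ be nonnegative integers with $h_0 = 1$ and $h_j = 0$ for $j > s$. Define $f_k = \sum_{j=0}^{k+1} \binom{d-j+1}{k-j+1} h_j$. Then the sequence $(f_0, f_1, \dots, f_d)$ is unimodal: there exists $p$ with $\lfloor d/2 \rfloor \le p \le \lceil (d+s)/2 \rceil - 1$ such that $f_0 \le f_1 \le \cdots \le f_p \ge f_{p+1} \ge \cdots \ge f_d$. -/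
private lemma lem_up (n r : ℕ) (hr : 2 * r + 1 ≤ n) : n.choose r ≤ n.choose (r + 1) := by
  have e := Nat.choose_succ_right_eq n r
  have h1 : n.choose r * (r + 1) ≤ n.choose r * (n - r) :=
    Nat.mul_le_mul_left _ (by omega)
  rw [← e] at h1
  exact Nat.le_of_mul_le_mul_right h1 (by omega)

private lemma lem_down (n r : ℕ) (hr : n ≤ 2 * r + 1) : n.choose (r + 1) ≤ n.choose r := by
  have e := Nat.choose_succ_right_eq n r
  have h1 : n.choose r * (n - r) ≤ n.choose r * (r + 1) :=
    Nat.mul_le_mul_left _ (by omega)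
  rw [← e] at h1
  exact Nat.le_of_mul_le_mul_right h1 (by omega)

private lemma lem_concave (n r : ℕ) (hr : r + 2 ≤ n)
    (h2 : ((2 * r + 2 : ℤ) - n) ^ 2 ≤ (n : ℤ) + 2) :
    n.choose r + n.choose (r + 2) ≤ 2 * n.choose (r + 1) := by
  obtain ⟨m, hm⟩ : ∃ m, n = r + 2 + m := ⟨n - r - 2, by omega⟩
  subst hm
  set A := (r + 2 + m).choose r with hA
  set B := (r + 2 + m).choose (r + 1) with hB
  set C := (r + 2 + m).choose (r + 2) with hC
  have e1 : B * (r + 1) = A * (m + 2) := by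
    have e := Nat.choose_succ_right_eq (r + 2 + m) r
    have h' : r + 2 + m - r = m + 2 := by omega
    rw [h'] at e; exact e
  have e2 : C * (r + 2) = B * (m + 1) := by
    have e := Nat.choose_succ_right_eq (r + 2 + m) (r + 1)
    have h' : r + 2 + m - (r + 1) = m + 1 := by omega
    rw [h'] at e; exact e
  have arith : (r + 1) * (r + 2) + (m + 1) * (m + 2) ≤ 2 * ((r + 2) * (m + 2)) := by
    have h2' : ((r : ℤ) - m) ^ 2 ≤ (r : ℤ) + m + 4 := by push_cast at h2; nlinarith [h2]
    zify; nlinarith [h2']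
  have big : (A + C) * ((r + 1) * ((r + 2) * (m + 2))) ≤
      (2 * B) * ((r + 1) * ((r + 2) * (m + 2))) := by
    calc (A + C) * ((r + 1) * ((r + 2) * (m + 2)))
        = (A * (m + 2)) * ((r + 1) * (r + 2)) + (C * (r + 2)) * ((r + 1) * (m + 2)) := by ring
      _ = (B * (r + 1)) * ((r + 1) * (r + 2)) + (B * (m + 1)) * ((r + 1) * (m + 2)) := by
          rw [← e1, ← e2]
      _ = (B * (r + 1)) * ((r + 1) * (r + 2) + (m + 1) * (m + 2)) := by ring
      _ ≤ (B * (r + 1)) * (2 * ((r + 2) * (m + 2))) := Nat.mul_le_mul_left _ arith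
      _ = (2 * B) * ((r + 1) * ((r + 2) * (m + 2))) := by ring
  exact Nat.le_of_mul_le_mul_right big (by positivity)

set_option maxHeartbeats 2000000

theorem stmt_9 (d s : ℕ) (hs : 1 ≤ s) (hd : (2 * s ^ 2 : ℤ) - 2 * s - 2 ≤ (d : ℤ))
    (h : ℕ → ℕ) (h0 : h 0 = 1) (hvan : ∀ j, s < j → h j = 0) (f : ℕ → ℕ)
    (hf : ∀ k, k ≤ d → f k = ∑ j ∈ Finset.range (k + 2), (d + 1 - j).choose (k + 1 - j) * h j) :
    ∃ p, d / 2 ≤ p ∧ p ≤ (d + s + 1) / 2 - 1 ∧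
      (∀ k, k < p → f k ≤ f (k + 1)) ∧
      (∀ k, p ≤ k → k < d → f (k + 1) ≤ f k) := by
  classical
  have hdZ : (2 * (s : ℤ) ^ 2 : ℤ) ≤ (d : ℤ) + 2 * s + 2 := by linarith
  have hsd : 1 ≤ d → s ≤ d := by
    intro h1
    rcases le_or_gt s 1 with hc | hc
    · omega
    · have hc' : (2 : ℤ) ≤ (s : ℤ) := by exact_mod_cast hc
      have hZ : (0 : ℤ) ≤ (2 * (s : ℤ) + 1) * ((s : ℤ) - 2) :=
        mul_nonneg (by positivity) (by linarith)
      have : (s : ℤ) ≤ (d : ℤ) := by nlinarith [hdZ, hZ]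
      exact_mod_cast this
  -- increasing step
  have up : ∀ k, k + 1 ≤ d → 2 * k + 2 ≤ d → f k ≤ f (k + 1) := by
    intro k hk1 hk2
    rw [hf k (by omega), hf (k + 1) (by omega)]
    conv_rhs => rw [Finset.sum_range_succ]
    refine le_trans (Finset.sum_le_sum ?_) (Nat.le_add_right _ _)
    intro j hj
    have hjk : j < k + 2 := Finset.mem_range.mp hj
    have e : k + 1 + 1 - j = (k + 1 - j) + 1 := by omega
    rw [e]
    exact mul_le_mul_left (lem_up _ _ (by omega)) _
  -- decreasing step, easy region
  have downE : ∀ k, k < d → d + s ≤ 2 * k + 2 → f (k + 1) ≤ f k := by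
    intro k hkd hks
    have hsd' : s ≤ d := hsd (by omega)
    rw [hf (k + 1) (by omega), hf k (by omega)]
    conv_lhs => rw [Finset.sum_range_succ]
    have hz : h (k + 2) = 0 := hvan _ (by omega)
    rw [hz, mul_zero, add_zero]
    apply Finset.sum_le_sum
    intro j hj
    have hjk : j < k + 2 := Finset.mem_range.mp hj
    by_cases hjs : j ≤ s
    · have e : k + 1 + 1 - j = (k + 1 - j) + 1 := by omega
      rw [e]
      exact mul_le_mul_left (lem_down _ _ (by omega)) _
    · rw [hvan j (by omega), mul_zero, mul_zero]
  -- sum representation truncated at degree s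
  have sumr : ∀ k, s ≤ k + 1 → k ≤ d →
      f k = ∑ j ∈ Finset.range (s + 1), (d + 1 - j).choose (k + 1 - j) * h j := by
    intro k hsk hkd
    rw [hf k hkd]
    refine (Finset.sum_subset (Finset.range_subset_range.mpr (by omega)) ?_).symm
    intro x _ hx
    have hx' : s < x := by simp only [Finset.mem_range] at hx; omega
    rw [hvan x hx', mul_zero]
  -- concavity in the band
  have keyc : ∀ k, d ≤ 2 * k + 1 → 2 * k + 5 ≤ d + s → f k + f (k + 2) ≤ 2 * f (k + 1) := by
    intro k h1 h2
    have hs4 : 4 ≤ s := by omega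
    have hsZ4 : (4 : ℤ) ≤ (s : ℤ) := by exact_mod_cast hs4
    have hd1 : (1 : ℤ) ≤ (d : ℤ) := by nlinarith [hdZ, hsZ4]
    have hsd' : s ≤ d := hsd (by exact_mod_cast hd1)
    have hk1 : s ≤ k + 1 := by
      have ha : (d : ℤ) ≤ 2 * k + 1 := by exact_mod_cast h1
      have hb : (4 : ℤ) ≤ (s : ℤ) := by exact_mod_cast hs4
      have hZ : (s : ℤ) ≤ (k : ℤ) + 1 := by nlinarith [hdZ, ha, hb]
      exact_mod_cast hZ
    have hk2 : k + 2 ≤ d := by omega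
    rw [sumr k (by omega) (by omega), sumr (k + 1) (by omega) (by omega),
      sumr (k + 2) (by omega) (by omega)]
    rw [← Finset.sum_add_distrib, Finset.mul_sum]
    apply Finset.sum_le_sum
    intro j hj
    have hjs : j ≤ s := by simp only [Finset.mem_range] at hj; omega
    have e2 : k + 1 + 1 - j = (k + 1 - j) + 1 := by omega
    have e3 : k + 2 + 1 - j = (k + 1 - j) + 2 := by omega
    rw [e2, e3]
    have hsq : ((2 * ((k + 1 - j : ℕ) : ℤ) + 2 : ℤ) - ((d + 1 - j : ℕ) : ℤ)) ^ 2 ≤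
        ((d + 1 - j : ℕ) : ℤ) + 2 := by
      have hjk : j ≤ k + 1 := by omega
      have hjd : j ≤ d + 1 := by omega
      rw [Nat.cast_sub hjk, Nat.cast_sub hjd]
      push_cast
      have ha : (d : ℤ) ≤ 2 * k + 1 := by exact_mod_cast h1
      have hb : (2 * k + 5 : ℤ) ≤ (d : ℤ) + s := by exact_mod_cast h2
      have hcJ : (0 : ℤ) ≤ (j : ℤ) := by positivity
      have hcJ' : (j : ℤ) ≤ (s : ℤ) := by exact_mod_cast hjs
      have hsZ : (4 : ℤ) ≤ (s : ℤ) := by exact_mod_cast hs4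
      set c : ℤ := 2 * (k : ℤ) + 3 - d - j with hc
      have hb1 : (2 : ℤ) - s ≤ c := by simp only [hc]; linarith
      have hb2 : c ≤ (s : ℤ) - 2 := by simp only [hc]; linarith
      have hprod : (0 : ℤ) ≤ ((s : ℤ) - 2 - c) * (c - (2 - s)) :=
        mul_nonneg (by linarith) (by linarith)
      have hc2 : c ^ 2 ≤ ((s : ℤ) - 2) ^ 2 := by nlinarith [hprod]
      have hfin : ((s : ℤ) - 2) ^ 2 ≤ (d : ℤ) + 3 - j := by nlinarith [hdZ, hsZ, hcJ']
      have : (2 * ((k : ℤ) + 1 - j) + 2 - ((d : ℤ) + 1 - j)) = c := by simp only [hc]; ring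
      rw [this]
      linarith
    have hcc := lem_concave (d + 1 - j) (k + 1 - j) (by omega) hsq
    have h' := mul_le_mul_left hcc (h j)
    rw [add_mul] at h'
    rw [mul_assoc] at h'
    exact h'
  -- choose p
  set top := (d + s + 1) / 2 - 1 with htop
  set P : ℕ → Prop := fun q => ∀ k, k < q → f k ≤ f (k + 1) with hP
  haveI : DecidablePred P := Classical.decPred P
  set p := Nat.findGreatest P top with hp
  have hlotop : d / 2 ≤ top := by omega
  have hPlo : P (d / 2) := by
    intro k hk
    exact up k (by omega) (by omega)
  have hplo : d / 2 ≤ p := Nat.le_findGreatest hlotop hPlo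
  have hptop : p ≤ top := Nat.findGreatest_le top
  have hPp : P p := Nat.findGreatest_spec hlotop hPlo
  have down : ∀ k, p ≤ k → k < d → f (k + 1) ≤ f k := by
    intro k hpk
    induction k, hpk using Nat.le_induction with
    | base =>
      intro hpd
      by_cases hc : d + s ≤ 2 * p + 2
      · exact downE p hpd hc
      · have hptop' : p + 1 ≤ top := by omega
        have hnp : ¬ P (p + 1) :=
          Nat.findGreatest_is_greatest (by rw [← hp]; exact Nat.lt_succ_self p) hptop'
        have hPP : P (p + 1) ↔ ∀ k, k < p + 1 → f k ≤ f (k + 1) := by rw [hP]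
        by_contra hcon
        refine hnp (hPP.mpr fun k hk => ?_)
        rcases Nat.lt_or_ge k p with hcase | hcase
        · exact hPp k hcase
        · have : k = p := by omega
          subst this
          omega
    | succ k hk IH =>
      intro hkd
      by_cases hc : d + s ≤ 2 * (k + 1) + 2
      · exact downE (k + 1) hkd hc
      · have h1 : d ≤ 2 * k + 1 := by omega
        have h2 : 2 * k + 5 ≤ d + s := by omega
        have hconc := keyc k h1 h2
        have hprev := IH (by omega)
        have e : k + 1 + 1 = k + 2 := by omega
        rw [e]
        omega
  exact ⟨p, hplo, hptop, hPp, down⟩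
end

section
/- Let $d \ge 14$ and let $h_0, \dots, h_d$ be nonnegative integers with $h_0 = 1$ and $h_j = 0$ for $j > 5$. Define $f_k = \sum_{j=0}^{k+1} \binom{d-j+1}{k-j+1} h_j$. Then the sequence $(f_0, \dots, f_d)$ is unimodal. -/
private lemma choose_inc (n s : ℕ) (hs : 2 * s < n) : n.choose s ≤ n.choose (s + 1) := by
  have he := Nat.choose_succ_right_eq n s
  have h1 : s + 1 ≤ n - s := by omega
  have h2 : n.choose s * (s + 1) ≤ n.choose (s + 1) * (s + 1) := by
    rw [he]
    exact Nat.mul_le_mul_left _ h1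
  exact Nat.le_of_mul_le_mul_right h2 (Nat.succ_pos s)

private lemma choose_dec (n s : ℕ) (hs : n ≤ 2 * s + 1) : n.choose (s + 1) ≤ n.choose s := by
  by_cases hns : n ≤ s
  · have : n < s + 1 := by omega
    simp [Nat.choose_eq_zero_of_lt this]
  · have he := Nat.choose_succ_right_eq n s
    have h1 : n - s ≤ s + 1 := by omega
    have h2 : n.choose (s + 1) * (s + 1) ≤ n.choose s * (s + 1) := by
      rw [he]
      exact Nat.mul_le_mul_left _ h1
    exact Nat.le_of_mul_le_mul_right h2 (Nat.succ_pos s)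

private lemma choose_concave (N s : ℕ) (h2 : s + 2 ≤ N)
    (h3 : (s + 1) * (s + 2) + (N - (s + 1)) * (N - s) ≤ 2 * ((N - s) * (s + 2))) :
    N.choose s + N.choose (s + 2) ≤ 2 * N.choose (s + 1) := by
  have e1 : N.choose (s + 1) * (s + 1) = N.choose s * (N - s) := Nat.choose_succ_right_eq N s
  have e2 : N.choose (s + 2) * (s + 2) = N.choose (s + 1) * (N - (s + 1)) :=
    Nat.choose_succ_right_eq N (s + 1)
  have hpos : 0 < (N - s) * (s + 2) := Nat.mul_pos (by omega) (by omega)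
  have key : (N.choose s + N.choose (s + 2)) * ((N - s) * (s + 2)) ≤
      (2 * N.choose (s + 1)) * ((N - s) * (s + 2)) := by
    have a1 : N.choose s * ((N - s) * (s + 2)) = N.choose (s + 1) * ((s + 1) * (s + 2)) := by
      calc N.choose s * ((N - s) * (s + 2)) = (N.choose s * (N - s)) * (s + 2) := by ring
        _ = (N.choose (s + 1) * (s + 1)) * (s + 2) := by rw [e1]
        _ = N.choose (s + 1) * ((s + 1) * (s + 2)) := by ring
    have a2 : N.choose (s + 2) * ((N - s) * (s + 2)) =
        N.choose (s + 1) * ((N - (s + 1)) * (N - s)) := by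
      calc N.choose (s + 2) * ((N - s) * (s + 2))
          = (N.choose (s + 2) * (s + 2)) * (N - s) := by ring
        _ = (N.choose (s + 1) * (N - (s + 1))) * (N - s) := by rw [e2]
        _ = N.choose (s + 1) * ((N - (s + 1)) * (N - s)) := by ring
    calc (N.choose s + N.choose (s + 2)) * ((N - s) * (s + 2))
        = N.choose s * ((N - s) * (s + 2)) + N.choose (s + 2) * ((N - s) * (s + 2)) := by ring
      _ = N.choose (s + 1) * ((s + 1) * (s + 2) + (N - (s + 1)) * (N - s)) := by
          rw [a1, a2]; ring
      _ ≤ N.choose (s + 1) * (2 * ((N - s) * (s + 2))) := Nat.mul_le_mul_left _ h3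
      _ = (2 * N.choose (s + 1)) * ((N - s) * (s + 2)) := by ring
  exact Nat.le_of_mul_le_mul_right key hpos

theorem stmt_10 (d : ℕ) (hd : 14 ≤ d) (h : ℕ → ℕ) (h0 : h 0 = 1)
    (hvan : ∀ j, 5 < j → h j = 0) (f : ℕ → ℕ)
    (hf : ∀ k, k ≤ d → f k = ∑ j ∈ Finset.range (k + 2), (d + 1 - j).choose (k + 1 - j) * h j) :
    ∃ p, p ≤ d ∧ (∀ k, k < p → f k ≤ f (k + 1)) ∧ (∀ k, p ≤ k → k < d → f (k + 1) ≤ f k) := by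
  set m := d / 2 with hm
  have hm7 : 7 ≤ m := by omega
  have hmd : m + 2 ≤ d := by omega
  -- Increasing part: termwise
  have inc_step : ∀ k, 2 * k + 1 < d → f k ≤ f (k + 1) := by
    intro k hk
    rw [hf k (by omega), hf (k + 1) (by omega)]
    calc ∑ j ∈ Finset.range (k + 2), (d + 1 - j).choose (k + 1 - j) * h j
        ≤ ∑ j ∈ Finset.range (k + 2), (d + 1 - j).choose (k + 1 + 1 - j) * h j := by
          apply Finset.sum_le_sum
          intro j hj
          have hj' : j < k + 2 := Finset.mem_range.mp hj
          have e : k + 1 + 1 - j = (k + 1 - j) + 1 := by omega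
          rw [e]
          exact Nat.mul_le_mul (choose_inc _ _ (by omega)) le_rfl
      _ ≤ ∑ j ∈ Finset.range (k + 1 + 2), (d + 1 - j).choose (k + 1 + 1 - j) * h j := by
          apply Finset.sum_le_sum_of_subset
          exact Finset.range_subset_range.mpr (by omega)
  -- Decreasing part: termwise
  have dec_step : ∀ k, d + 3 ≤ 2 * k → k < d → f (k + 1) ≤ f k := by
    intro k hk hkd
    rw [hf k (by omega), hf (k + 1) (by omega)]
    have e : k + 1 + 2 = (k + 2) + 1 := by ring
    rw [e, Finset.sum_range_succ]
    have hz : h (k + 2) = 0 := hvan _ (by omega)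
    rw [hz, mul_zero, add_zero]
    apply Finset.sum_le_sum
    intro j hj
    have hj' : j < k + 2 := Finset.mem_range.mp hj
    by_cases hj5 : 5 < j
    · rw [hvan j hj5, mul_zero, mul_zero]
    · have e2 : k + 1 + 1 - j = (k + 1 - j) + 1 := by omega
      rw [e2]
      exact Nat.mul_le_mul (choose_dec _ _ (by omega)) le_rfl
  -- Truncation of the sum to range 6
  have trunc : ∀ k, 4 ≤ k → k ≤ d →
      f k = ∑ j ∈ Finset.range 6, (d + 1 - j).choose (k + 1 - j) * h j := by
    intro k h4 hkd
    rw [hf k hkd]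
    symm
    apply Finset.sum_subset (Finset.range_subset_range.mpr (by omega))
    intro j _ hj6
    have : 5 < j := by
      simp only [Finset.mem_range, not_lt] at hj6
      omega
    rw [hvan j this, mul_zero]
  -- Middle concavity: f m + f (m+2) ≤ 2 * f (m+1)
  have mid : f m + f (m + 2) ≤ 2 * f (m + 1) := by
    rw [trunc m (by omega) (by omega), trunc (m + 1) (by omega) (by omega),
      trunc (m + 2) (by omega) (by omega)]
    rw [← Finset.sum_add_distrib, Finset.mul_sum]
    apply Finset.sum_le_sum
    intro j hj
    have hj6 : j < 6 := Finset.mem_range.mp hj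
    have key : (d + 1 - j).choose (m + 1 - j) + (d + 1 - j).choose (m + 2 + 1 - j) ≤
        2 * (d + 1 - j).choose (m + 1 + 1 - j) := by
      have e1 : m + 2 + 1 - j = (m + 1 - j) + 2 := by omega
      have e2 : m + 1 + 1 - j = (m + 1 - j) + 1 := by omega
      rw [e1, e2]
      apply choose_concave
      · omega
      · -- arithmetic condition
        obtain ⟨t, b, ht, hbd, hb1, hb2, htb1, htb2, htb3⟩ :
            ∃ t b, m + 1 - j = t ∧ d + 1 - j = t + 2 + b ∧
              (d + 1 - j) - (t + 1) = b + 1 ∧ (d + 1 - j) - t = b + 2 ∧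
              t ≤ b + 3 ∧ b ≤ t + 3 ∧ 5 ≤ t + b := by
          refine ⟨m + 1 - j, d - m - 2, by omega, by omega, by omega, by omega, ?_, ?_, ?_⟩ <;>
            omega
        rw [ht, hb1, hb2]
        -- goal: (t+1)*(t+2) + (b+1)*(b+2) ≤ 2*((b+2)*(t+2))
        zify
        nlinarith [mul_nonneg (by linarith : (0:ℤ) ≤ (b:ℤ) + 3 - t) (by linarith : (0:ℤ) ≤ (t:ℤ) + 3 - b)]
    calc (d + 1 - j).choose (m + 1 - j) * h j + (d + 1 - j).choose (m + 2 + 1 - j) * h j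
        = ((d + 1 - j).choose (m + 1 - j) + (d + 1 - j).choose (m + 2 + 1 - j)) * h j := by ring
      _ ≤ (2 * (d + 1 - j).choose (m + 1 + 1 - j)) * h j := Nat.mul_le_mul key le_rfl
      _ = 2 * ((d + 1 - j).choose (m + 1 + 1 - j) * h j) := by ring
  -- Assemble
  by_cases hA : f m ≤ f (m + 1)
  · by_cases hB : f (m + 1) ≤ f (m + 2)
    · refine ⟨m + 2, by omega, ?_, ?_⟩
      · intro k hk
        have : k < m ∨ k = m ∨ k = m + 1 := by omega
        rcases this with hc | hc | hc
        · exact inc_step k (by omega)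
        · subst hc; exact hA
        · subst hc; exact hB
      · intro k hk1 hk2
        exact dec_step k (by omega) hk2
    · refine ⟨m + 1, by omega, ?_, ?_⟩
      · intro k hk
        have : k < m ∨ k = m := by omega
        rcases this with hc | hc
        · exact inc_step k (by omega)
        · subst hc; exact hA
      · intro k hk1 hk2
        have : k = m + 1 ∨ m + 2 ≤ k := by omega
        rcases this with hc | hc
        · subst hc
          have e : m + 1 + 1 = m + 2 := by omega
          rw [e]; omega
        · exact dec_step k (by omega) hk2
  · refine ⟨m, by omega, ?_, ?_⟩
    · intro k hk
      exact inc_step k (by omega)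
    · intro k hk1 hk2
      have : k = m ∨ k = m + 1 ∨ m + 2 ≤ k := by omega
      rcases this with hc | hc | hc
      · subst hc; omega
      · subst hc
        have e : m + 1 + 1 = m + 2 := by omega
        rw [e]; omega
      · exact dec_step k (by omega) hk2
end

section
/- Let $d \ge 2$ and let $h_0, \dots, h_d$ be nonnegative integers with $h_0 = 1$ satisfying Hibi's inequalities $\sum_{j=0}^{m+1} h_j \ge \sum_{j=d-m}^{d} h_j$ for $0 \le m \le \lfloor d/2 \rfloor - 1$. Define $f_k = \sum_{j=0}^{k+1} \binom{d-j+1}{k-j+1} h_j$ and $f_{-1} = 1$. Then $\min\{f_0, f_d\} \le f_k$ for all $0 \le k \le d$. -/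
lemma le_choose_aux : ∀ (n k : ℕ), 1 ≤ k → k < n → n ≤ n.choose k := by
  intro n
  induction n with
  | zero => intro k h1 h2; omega
  | succ n ih =>
    intro k h1 h2
    rcases eq_or_lt_of_le h1 with h1' | h1'
    · simp [← h1']
    · rcases eq_or_lt_of_le (Nat.lt_succ_iff.mp h2) with h2' | h2'
      · rw [h2', Nat.choose_succ_self_right]
      · have := ih k h1 h2'
        have h3 : 1 ≤ n.choose (k - 1) := Nat.choose_pos (by omega)
        have : (n + 1).choose k = n.choose (k - 1) + n.choose k := by
          rw [show k = (k - 1) + 1 by omega, Nat.choose_succ_succ]; simp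
        omega

theorem stmt_13 (d : ℕ) (hd : 2 ≤ d) (h : ℕ → ℕ) (h0 : h 0 = 1)
    (hibi : ∀ m, m ≤ d / 2 - 1 →
      ∑ j ∈ Finset.range (m + 2), h j ≥ ∑ j ∈ Finset.Icc (d - m) d, h j)
    (f : ℕ → ℕ)
    (hf : ∀ k, k ≤ d → f k = ∑ j ∈ Finset.range (k + 2), (d + 1 - j).choose (k + 1 - j) * h j) :
    ∀ k, k ≤ d → min (f 0) (f d) ≤ f k := by
  intro k hk
  rcases eq_or_lt_of_le hk with rfl | hkd
  · exact min_le_right _ _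
  · refine le_trans (min_le_left _ _) ?_
    rw [hf 0 (by omega), hf k hk]
    have hsub : Finset.range 2 ⊆ Finset.range (k + 2) := Finset.range_subset_range.mpr (by omega)
    calc ∑ j ∈ Finset.range 2, (d + 1 - j).choose (1 - j) * h j
        = (d + 1) * h 0 + 1 * h 1 := by
          simp [Finset.sum_range_succ]
      _ ≤ (d + 1).choose (k + 1) * h 0 + d.choose k * h 1 := by
          have c1 : d + 1 ≤ (d + 1).choose (k + 1) := by
            rcases Nat.eq_zero_or_pos k with rfl | hk0
            · simp
            · exact le_choose_aux (d + 1) (k + 1) (by omega) (by omega)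
          have c2 : 1 ≤ d.choose k := Nat.choose_pos (by omega)
          exact Nat.add_le_add (Nat.mul_le_mul_right _ c1) (Nat.mul_le_mul_right _ c2)
      _ = ∑ j ∈ Finset.range 2, (d + 1 - j).choose (k + 1 - j) * h j := by
          simp [Finset.sum_range_succ]
      _ ≤ ∑ j ∈ Finset.range (k + 2), (d + 1 - j).choose (k + 1 - j) * h j :=
          Finset.sum_le_sum_of_subset hsub
end
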